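/- In the two-patch tangential edge setting, there exists a linear operator P¹_e : V¹_pw → V¹_pw such that for every u ∈ V¹_pw: (1) P¹_e u is tangentially continuous, i.e. (P¹_e u)⁻(x,0) = (P¹_e u)⁺(x,0) for all x ∈ [0,1]; (2) P¹_e u = u if and only if u is tangentially continuous; and (3) P¹_e preserves patchwise polynomial moments of order r, i.e. for each σ ∈ {−,+} and all q₁, q₂ ∈ Q one has ∫_{[0,1]²} (P¹_e u)^σ(x,s) q₁(x) q₂(s) dx ds = ∫_{[0,1]²} u^σ(x,s) q₁(x) q₂(s) dx ds. -/

import Mathlib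

noncomputable section

/-- The `L²(0,1)` pairing `⟨f, g⟩ = ∫₀¹ f g`. -/
def l2ip (f g : ℝ → ℝ) : ℝ := ∫ x in (0:ℝ)..1, f x * g x

/-- Real polynomial functions of degree at most `r - 1`. -/
def polyDegLT (r : ℕ) : Set (ℝ → ℝ) :=
  {f | ∃ p : Polynomial ℝ, p.degree < (r : WithBot ℕ) ∧ f = fun x => p.eval x}

/-- Span of the tensor products `(x, s) ↦ w(x) λⱼ(s)` with `w` in the edge-parallel
space `W` and `λⱼ` the edge-perpendicular basis functions. -/
def tensorSpanW (W : Submodule ℝ (ℝ → ℝ)) {n : ℕ} (lam : Fin (n + 1) → ℝ → ℝ) :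
    Submodule ℝ (ℝ → ℝ → ℝ) :=
  Submodule.span ℝ {f | ∃ w ∈ W, ∃ j, f = fun x s => w x * lam j s}

/-- Tangential (edge) continuity: the two patch components agree on the edge `s = 0`. -/
def TangCont (u : (ℝ → ℝ → ℝ) × (ℝ → ℝ → ℝ)) : Prop :=
  ∀ x ∈ Set.Icc (0:ℝ) 1, u.1 x 0 = u.2 x 0

/-- The moment `∫_{[0,1]²} f(x,s) q₁(x) q₂(s) dx ds`. -/
def mom2 (f : ℝ → ℝ → ℝ) (q₁ q₂ : ℝ → ℝ) : ℝ :=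
  ∫ x in (0:ℝ)..1, ∫ s in (0:ℝ)..1, f x s * q₁ x * q₂ s

/-! Only the `+` patch is corrected. The function `g = λ⁺₀ - ν⁺` equals `1` at the edge and is
`L²`-orthogonal to `Q`; put `P u = (u⁻, u⁺ + (π [u]) ⊗ g)`, where `[u](x) = u⁻(x,0) - u⁺(x,0)` is
the edge jump (in `W₊` since `W₋ ⊆ W₊`) and `π` is a projection of `W₊` that keeps the values on
`[0,1]` and kills exactly the functions vanishing there (functions of `W₊` live on all of `ℝ`, but
tangential continuity only sees `[0,1]`). At `s = 0` the correction adds exactly the jump, it is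
zero iff the jump vanishes on the edge, and its moments factor as `(∫ π[u] q₁) (∫ g q₂) = 0`. -/

open Set

theorem LinearMap.exists_projection_ker_eq {K V W : Type*} [DivisionRing K] [AddCommGroup V]
    [Module K V] [AddCommGroup W] [Module K W] (f : V →ₗ[K] W) :
    ∃ π : V →ₗ[K] V, f ∘ₗ π = f ∧ ker π = ker f := by
  obtain ⟨C, hC⟩ := (ker f).exists_isCompl
  refine ⟨C.projection (ker f) hC.symm, LinearMap.ext fun x => ?_, C.ker_projection hC.symm⟩
  have hx : x - C.projection (ker f) hC.symm x ∈ ker f := C.sub_projection_mem hC.symm x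
  rw [mem_ker, map_sub, sub_eq_zero] at hx
  exact hx.symm

def tensor : (ℝ → ℝ) →ₗ[ℝ] (ℝ → ℝ) →ₗ[ℝ] ℝ → ℝ → ℝ :=
  LinearMap.mk₂ ℝ (fun c g x s => c x * g s)
    (fun _ _ _ => by ext; simp [add_mul]) (fun _ _ _ => by ext; simp [mul_assoc])
    (fun _ _ _ => by ext; simp [mul_add]) (fun _ _ _ => by ext; simp [mul_left_comm])

@[simp] lemma tensor_apply (c g : ℝ → ℝ) (x s : ℝ) : tensor c g x s = c x * g s := rfl

def edgeTrace : (ℝ → ℝ → ℝ) →ₗ[ℝ] ℝ → ℝ where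
  toFun f x := f x 0
  map_add' _ _ := rfl
  map_smul' _ _ := rfl

@[simp] lemma edgeTrace_apply (f : ℝ → ℝ → ℝ) (x : ℝ) : edgeTrace f x = f x 0 := rfl

section TensorSpan

variable {W : Submodule ℝ (ℝ → ℝ)} {n : ℕ} {lam : Fin (n + 1) → ℝ → ℝ}

lemma tensor_mem_tensorSpanW {c g : ℝ → ℝ} (hc : c ∈ W)
    (hg : g ∈ Submodule.span ℝ (range lam)) : tensor c g ∈ tensorSpanW W lam := by
  refine Submodule.span_le (p := (tensorSpanW W lam).comap (tensor c)) |>.mpr ?_ hg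
  rintro _ ⟨j, rfl⟩
  exact Submodule.subset_span ⟨c, hc, j, rfl⟩

lemma edgeTrace_mem {f : ℝ → ℝ → ℝ} (hf : f ∈ tensorSpanW W lam) : edgeTrace f ∈ W := by
  refine Submodule.span_le (p := W.comap edgeTrace) |>.mpr ?_ hf
  rintro _ ⟨w, hw, j, rfl⟩
  have htrace : edgeTrace (fun x s => w x * lam j s) = lam j 0 • w := by ext x; simp [mul_comm]
  rw [SetLike.mem_coe, Submodule.mem_comap, htrace]
  exact W.smul_mem _ hw

lemma apply_mem_span_of_mem_tensorSpanW {f : ℝ → ℝ → ℝ} (hf : f ∈ tensorSpanW W lam) (x : ℝ) :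
    f x ∈ Submodule.span ℝ (range lam) := by
  refine Submodule.span_le (p := (Submodule.span ℝ (range lam)).comap
    (LinearMap.proj (R := ℝ) (φ := fun _ : ℝ => ℝ → ℝ) x)) |>.mpr ?_ hf
  rintro _ ⟨w, -, j, rfl⟩
  have hslice : (fun s => w x * lam j s) = w x • lam j := rfl
  rw [SetLike.mem_coe, Submodule.mem_comap, LinearMap.proj_apply, hslice]
  exact Submodule.smul_mem _ (w x) (Submodule.subset_span ⟨j, rfl⟩)

end TensorSpan

lemma continuousOn_of_mem_span {α ι : Type*} [TopologicalSpace α] {S : Set α} {lam : ι → α → ℝ}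
    (hlam : ∀ j, ContinuousOn (lam j) S) {g : α → ℝ} (hg : g ∈ Submodule.span ℝ (range lam)) :
    ContinuousOn g S := by
  induction hg using Submodule.span_induction with
  | mem f h => obtain ⟨j, rfl⟩ := h; exact hlam j
  | zero => exact continuousOn_const
  | add f₁ f₂ _ _ ih₁ ih₂ => exact ih₁.add ih₂
  | smul a f _ ih => exact ih.const_smul a

lemma continuous_of_mem_polyDegLT {r : ℕ} {q : ℝ → ℝ} (hq : q ∈ polyDegLT r) : Continuous q := by
  obtain ⟨p, -, rfl⟩ := hq
  exact p.continuous

lemma l2ip_sub_left {f g q : ℝ → ℝ} (hf : ContinuousOn f (Icc 0 1))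
    (hg : ContinuousOn g (Icc 0 1)) (hq : ContinuousOn q (Icc 0 1)) :
    l2ip (f - g) q = l2ip f q - l2ip g q := by
  simp only [l2ip, Pi.sub_apply, sub_mul]
  exact intervalIntegral.integral_sub ((hf.mul hq).intervalIntegrable_of_Icc zero_le_one)
    ((hg.mul hq).intervalIntegrable_of_Icc zero_le_one)

lemma mom2_add_tensor {f : ℝ → ℝ → ℝ} {c g q₁ q₂ : ℝ → ℝ}
    (hf : ∀ x, ContinuousOn (f x) (Icc 0 1)) (hg : ContinuousOn g (Icc 0 1))
    (hq₂ : ContinuousOn q₂ (Icc 0 1)) (hgq : l2ip g q₂ = 0) :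
    mom2 (f + tensor c g) q₁ q₂ = mom2 f q₁ q₂ := by
  refine intervalIntegral.integral_congr fun x _ => ?_
  have hsplit : (fun s => (f + tensor c g) x s * q₁ x * q₂ s) =
      fun s => f x s * q₁ x * q₂ s + c x * q₁ x * (g s * q₂ s) := by
    ext s; simp only [Pi.add_apply, tensor_apply]; ring
  rw [hsplit, intervalIntegral.integral_add, intervalIntegral.integral_const_mul]
  · rw [show (∫ s in (0:ℝ)..1, g s * q₂ s) = 0 from hgq, mul_zero, add_zero]
  · exact (((hf x).mul continuousOn_const).mul hq₂).intervalIntegrable_of_Icc zero_le_one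
  · exact (continuousOn_const.mul (hg.mul hq₂)).intervalIntegrable_of_Icc zero_le_one

section EdgeCorrection

variable {Wm Wp : Submodule ℝ (ℝ → ℝ)} {nm np : ℕ}
  {lamm : Fin (nm + 1) → ℝ → ℝ} {lamp : Fin (np + 1) → ℝ → ℝ}

variable (Wm Wp lamm lamp) in
abbrev brokenSpace : Submodule ℝ ((ℝ → ℝ → ℝ) × (ℝ → ℝ → ℝ)) :=
  (tensorSpanW Wm lamm).prod (tensorSpanW Wp lamp)

def edgeJump (hW : Wm ≤ Wp) : brokenSpace Wm Wp lamm lamp →ₗ[ℝ] Wp :=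
  LinearMap.codRestrict Wp
    (edgeTrace ∘ₗ (LinearMap.fst ℝ _ _ - LinearMap.snd ℝ _ _) ∘ₗ Submodule.subtype _)
    fun u => by
      simpa using Wp.sub_mem (hW (edgeTrace_mem (Submodule.mem_prod.mp u.2).1))
        (edgeTrace_mem (Submodule.mem_prod.mp u.2).2)

@[simp] lemma edgeJump_apply (hW : Wm ≤ Wp) (u : brokenSpace Wm Wp lamm lamp) (x : ℝ) :
    (edgeJump hW u : ℝ → ℝ) x = u.val.1 x 0 - u.val.2 x 0 := rfl

def conformingProj {g : ℝ → ℝ} (hg : g ∈ Submodule.span ℝ (range lamp))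
    (c : brokenSpace Wm Wp lamm lamp →ₗ[ℝ] Wp) :
    brokenSpace Wm Wp lamm lamp →ₗ[ℝ] brokenSpace Wm Wp lamm lamp :=
  LinearMap.id + LinearMap.codRestrict _ (LinearMap.inr ℝ _ _ ∘ₗ tensor.flip g ∘ₗ Wp.subtype ∘ₗ c)
    fun u => Submodule.mem_prod.mpr ⟨zero_mem _, tensor_mem_tensorSpanW (c u).2 hg⟩

variable {g : ℝ → ℝ} (hg : g ∈ Submodule.span ℝ (range lamp))
  (c : brokenSpace Wm Wp lamm lamp →ₗ[ℝ] Wp)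

lemma conformingProj_fst (u : brokenSpace Wm Wp lamm lamp) :
    (conformingProj hg c u).val.1 = u.val.1 := by
  simp [conformingProj]

lemma conformingProj_snd (u : brokenSpace Wm Wp lamm lamp) :
    (conformingProj hg c u).val.2 = u.val.2 + tensor (c u) g := by
  simp [conformingProj]

variable {c} in
lemma tangCont_conformingProj (hg0 : g 0 = 1) {u : brokenSpace Wm Wp lamm lamp}
    (hc : ∀ x ∈ Icc (0:ℝ) 1, (c u : ℝ → ℝ) x = u.val.1 x 0 - u.val.2 x 0) :
    TangCont (conformingProj hg c u).val := by
  intro x hx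
  rw [conformingProj_fst, conformingProj_snd, Pi.add_apply, Pi.add_apply, tensor_apply, hg0,
    mul_one, hc x hx, add_sub_cancel]

variable {c} in
lemma conformingProj_eq_self_iff (hg0 : g 0 = 1)
    (hc : ∀ u : brokenSpace Wm Wp lamm lamp, ∀ x ∈ Icc (0:ℝ) 1,
      (c u : ℝ → ℝ) x = u.val.1 x 0 - u.val.2 x 0)
    (hc0 : ∀ u : brokenSpace Wm Wp lamm lamp, TangCont u.val → c u = 0)
    (u : brokenSpace Wm Wp lamm lamp) :
    conformingProj hg c u = u ↔ TangCont u.val := by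
  refine ⟨fun h => h ▸ tangCont_conformingProj hg hg0 (hc u), fun h => ?_⟩
  refine Subtype.ext (Prod.ext ?_ ?_)
  · exact conformingProj_fst hg c u
  · simp [conformingProj_snd, hc0 u h]

end EdgeCorrection

theorem stmt7_general
    -- edge-parallel derived spline spaces W₋ ⊆ W₊
    (Wm Wp : Submodule ℝ (ℝ → ℝ)) (hW : Wm ≤ Wp)
    -- edge-perpendicular spaces 𝕍₋, 𝕍₊ with bases interpolatory at the edge s = 0
    (nm np : ℕ)
    (lamm : Fin (nm + 1) → ℝ → ℝ) (lamp : Fin (np + 1) → ℝ → ℝ)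
    (hc_p : ∀ j, ContinuousOn (lamp j) (Set.Icc (0:ℝ) 1))
    (h0_p : ∀ j, lamp j 0 = if j = 0 then 1 else 0)
    -- the order r of moment preservation; Q ⊆ W₋
    (r : ℕ)
    -- corrector splines ν^σ vanishing at the edge with the moments of λ^σ₀
    (hnu_p : ∃ ν ∈ Submodule.span ℝ (Set.range lamp), ν 0 = 0 ∧
      ∀ q ∈ polyDegLT r, l2ip ν q = l2ip (lamp 0) q) :
    -- conclusion: the local edge-conforming projection P¹_e on V¹_pw
    ∃ P : ↥((tensorSpanW Wm lamm).prod (tensorSpanW Wp lamp)) →ₗ[ℝ]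
          ↥((tensorSpanW Wm lamm).prod (tensorSpanW Wp lamp)),
      (∀ u, TangCont ((P u : (ℝ → ℝ → ℝ) × (ℝ → ℝ → ℝ)))) ∧
      (∀ u, P u = u ↔ TangCont ((u : (ℝ → ℝ → ℝ) × (ℝ → ℝ → ℝ)))) ∧
      (∀ u, ∀ q₁ ∈ polyDegLT r, ∀ q₂ ∈ polyDegLT r,
        mom2 ((P u : (ℝ → ℝ → ℝ) × (ℝ → ℝ → ℝ)).1) q₁ q₂ =
          mom2 ((u : (ℝ → ℝ → ℝ) × (ℝ → ℝ → ℝ)).1) q₁ q₂ ∧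
        mom2 ((P u : (ℝ → ℝ → ℝ) × (ℝ → ℝ → ℝ)).2) q₁ q₂ =
          mom2 ((u : (ℝ → ℝ → ℝ) × (ℝ → ℝ → ℝ)).2) q₁ q₂) := by
  obtain ⟨ν, hν, hν0, hνq⟩ := hnu_p
  set g := lamp 0 - ν
  have hg : g ∈ Submodule.span ℝ (range lamp) := sub_mem (Submodule.subset_span ⟨0, rfl⟩) hν
  have hg0 : g 0 = 1 := by simp [g, h0_p, hν0]
  have hgc : ContinuousOn g (Icc 0 1) := continuousOn_of_mem_span hc_p hg
  have hgq : ∀ q ∈ polyDegLT r, l2ip g q = 0 := fun q hq => by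
    rw [l2ip_sub_left (hc_p 0) (continuousOn_of_mem_span hc_p hν)
      (continuous_of_mem_polyDegLT hq).continuousOn, hνq q hq, sub_self]
  obtain ⟨π, hπ, hπker⟩ :=
    (LinearMap.funLeft ℝ ℝ ((↑) : Icc (0:ℝ) 1 → ℝ) ∘ₗ Wp.subtype).exists_projection_ker_eq
  set c := π ∘ₗ edgeJump (lamm := lamm) (lamp := lamp) hW
  have hc : ∀ u, ∀ x ∈ Icc (0:ℝ) 1, (c u : ℝ → ℝ) x = u.val.1 x 0 - u.val.2 x 0 :=
    fun u x hx => by simpa [c] using congrFun (LinearMap.congr_fun hπ (edgeJump hW u)) ⟨x, hx⟩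
  have hc0 : ∀ u, TangCont u.val → c u = 0 := fun u hu => by
    rw [LinearMap.comp_apply, ← LinearMap.mem_ker, hπker]
    ext ⟨x, hx⟩
    simpa [sub_eq_zero] using hu x hx
  refine ⟨conformingProj hg c, fun u => tangCont_conformingProj hg hg0 (hc u),
    conformingProj_eq_self_iff hg hg0 hc hc0, fun u q₁ _ q₂ hq₂ => ⟨?_, ?_⟩⟩
  · rw [conformingProj_fst]
  · rw [conformingProj_snd]
    exact mom2_add_tensor
      (fun x => continuousOn_of_mem_span hc_p (apply_mem_span_of_mem_tensorSpanW u.2.2 x)) hgc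
      (continuous_of_mem_polyDegLT hq₂).continuousOn (hgq q₂ hq₂)

/-- Proposition 4.1 of the paper, two-patch tangential edge setting:
there exists a local edge-conforming operator `P¹_e` on the broken tangential space
`V¹_pw` which maps into the tangentially continuous fields, fixes exactly the tangentially
continuous fields, and preserves the patchwise polynomial moments of order `r`. -/
theorem stmt7
    -- edge-parallel derived spline spaces W₋ ⊆ W₊
    (Wm Wp : Submodule ℝ (ℝ → ℝ)) (hW : Wm ≤ Wp)
    [FiniteDimensional ℝ Wp]
    (hWc : ∀ f ∈ Wp, ContinuousOn f (Set.Icc (0:ℝ) 1))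
    -- edge-perpendicular spaces 𝕍₋, 𝕍₊ with bases interpolatory at the edge s = 0
    (nm np : ℕ)
    (lamm : Fin (nm + 1) → ℝ → ℝ) (lamp : Fin (np + 1) → ℝ → ℝ)
    (hc_m : ∀ j, ContinuousOn (lamm j) (Set.Icc (0:ℝ) 1))
    (hc_p : ∀ j, ContinuousOn (lamp j) (Set.Icc (0:ℝ) 1))
    (hli_m : LinearIndependent ℝ lamm) (hli_p : LinearIndependent ℝ lamp)
    (h0_m : ∀ j, lamm j 0 = if j = 0 then 1 else 0)
    (h0_p : ∀ j, lamp j 0 = if j = 0 then 1 else 0)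
    -- the order r of moment preservation; Q ⊆ W₋
    (r : ℕ)
    (hQ : polyDegLT r ⊆ (Wm : Set (ℝ → ℝ)))
    -- corrector splines ν^σ vanishing at the edge with the moments of λ^σ₀
    (hnu_m : ∃ ν ∈ Submodule.span ℝ (Set.range lamm), ν 0 = 0 ∧
      ∀ q ∈ polyDegLT r, l2ip ν q = l2ip (lamm 0) q)
    (hnu_p : ∃ ν ∈ Submodule.span ℝ (Set.range lamp), ν 0 = 0 ∧
      ∀ q ∈ polyDegLT r, l2ip ν q = l2ip (lamp 0) q)
    -- R¹ : W₊ → W₋ the L²-orthogonal projection onto W₋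
    (R1 : ↥Wp →ₗ[ℝ] ↥Wm)
    (hR1orth : ∀ w : ↥Wp, ∀ v ∈ Wm, l2ip ((w : ℝ → ℝ) - (R1 w : ℝ → ℝ)) v = 0) :
    -- conclusion: the local edge-conforming projection P¹_e on V¹_pw
    ∃ P : ↥((tensorSpanW Wm lamm).prod (tensorSpanW Wp lamp)) →ₗ[ℝ]
          ↥((tensorSpanW Wm lamm).prod (tensorSpanW Wp lamp)),
      (∀ u, TangCont ((P u : (ℝ → ℝ → ℝ) × (ℝ → ℝ → ℝ)))) ∧
      (∀ u, P u = u ↔ TangCont ((u : (ℝ → ℝ → ℝ) × (ℝ → ℝ → ℝ)))) ∧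
      (∀ u, ∀ q₁ ∈ polyDegLT r, ∀ q₂ ∈ polyDegLT r,
        mom2 ((P u : (ℝ → ℝ → ℝ) × (ℝ → ℝ → ℝ)).1) q₁ q₂ =
          mom2 ((u : (ℝ → ℝ → ℝ) × (ℝ → ℝ → ℝ)).1) q₁ q₂ ∧
        mom2 ((P u : (ℝ → ℝ → ℝ) × (ℝ → ℝ → ℝ)).2) q₁ q₂ =
          mom2 ((u : (ℝ → ℝ → ℝ) × (ℝ → ℝ → ℝ)).2) q₁ q₂) :=
  stmt7_general Wm Wp hW nm np lamm lamp hc_p h0_p r hnu_p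

end
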